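/- arXiv:2107.04948 — 7 statements merged into one kernel-verified Lean document; each statement's English description precedes it below -/
import Mathlib

section
/- Suppose m = n (full cliques). Then for almost every initial vector x(0) ∈ [0,1]^n with respect to n-dimensional Lebesgue measure, every node state converges: for each i ∈ {1,…,n} the limit lim_{t→∞} x_i(t) exists in ℝ. -/
open Filter MeasureTheory

/-- Average of a vector of `n` opinions. -/
noncomputable def cliqueAvg (n : ℕ) (x : Fin n → ℝ) : ℝ := (∑ j, x j) / (n : ℝ)

/-- Full-clique (`m = n`) bounded-confidence opinion dynamics with mixing parameter `δ`
and confidence level `η`, started from `x0`. -/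
noncomputable def fcTraj (n : ℕ) (δ η : ℝ) (x0 : Fin n → ℝ) : ℕ → Fin n → ℝ
  | 0 => x0
  | t + 1 => fun i =>
      if |fcTraj n δ η x0 t i - cliqueAvg n (fcTraj n δ η x0 t)| ≤ η then
        (1 - δ) * fcTraj n δ η x0 t i + δ * cliqueAvg n (fcTraj n δ η x0 t)
      else fcTraj n δ η x0 t i

/-!
Convergence holds for every initial vector. With `e = x - x̄` and `q_j = e_j` for the nodes that
move (`|e_j| ≤ η`), `q_j = 0` otherwise, a step replaces `x` by `x - δ q`, and the dispersion
`∑ e_j²` drops by at least `δ (2 - δ) ∑ q_j²`; hence `∑ q_j² → 0`. Once `∑ q_j² < (η/3)²` the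
average moves by less than `η/3` per step, so a frozen node (`|e_j| > η`) would reenter the active
set with `|e_j| > 2η/3`, which is too large for `∑ q_j²`: the active set decreases and is eventually
some constant `S`. Then the nodes outside `S` stay fixed, the deviations of the nodes in `S` tend to
`0`, and `(n - #S) x̄ = ∑_{j ∈ S} e_j + ∑_{j ∉ S} x_j` makes `x̄` converge if `S ≠ univ`; if
`S = univ` every step preserves `x̄`.
-/

open Finset Topology

lemma tendsto_zero_of_add_le {u g : ℕ → ℝ} (hu : ∀ t, 0 ≤ u t) (hg : ∀ t, 0 ≤ g t)
    (h : ∀ t, u (t + 1) + g t ≤ u t) : Tendsto g atTop (𝓝 0) := by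
  have htel : ∀ N, ∑ t ∈ range N, g t + u N ≤ u 0 := by
    intro N
    induction N with
    | zero => simp
    | succ N ih => rw [sum_range_succ]; linarith [h N]
  exact (summable_of_sum_range_le hg fun N => by linarith [htel N, hu N]).tendsto_atTop_zero

section Vectors

variable {n : ℕ}

noncomputable def cliqueDev (n : ℕ) (x : Fin n → ℝ) (j : Fin n) : ℝ := x j - cliqueAvg n x

noncomputable def dispersion (n : ℕ) (x : Fin n → ℝ) : ℝ := ∑ j, cliqueDev n x j ^ 2

lemma cliqueAvg_sub_mul (x q : Fin n → ℝ) (c : ℝ) :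
    cliqueAvg n (fun j => x j - c * q j) = cliqueAvg n x - c * cliqueAvg n q := by
  simp only [cliqueAvg, sum_sub_distrib, ← mul_sum]
  ring

lemma cliqueDev_sub_mul (x q : Fin n → ℝ) (c : ℝ) (j : Fin n) :
    cliqueDev n (fun j => x j - c * q j) j = cliqueDev n x j - c * cliqueDev n q j := by
  simp only [cliqueDev, cliqueAvg_sub_mul]
  ring

lemma sum_eq_mul_cliqueAvg (x : Fin n → ℝ) : ∑ j, x j = n * cliqueAvg n x := by
  rcases n.eq_zero_or_pos with rfl | hn
  · simp
  · rw [cliqueAvg, mul_div_cancel₀ _ (by positivity)]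

lemma sum_cliqueDev (x : Fin n → ℝ) : ∑ j, cliqueDev n x j = 0 := by
  simp [cliqueDev, sum_sub_distrib, sum_eq_mul_cliqueAvg x]

lemma cliqueAvg_cliqueDev (x : Fin n → ℝ) : cliqueAvg n (cliqueDev n x) = 0 := by
  rw [cliqueAvg, sum_cliqueDev, zero_div]

lemma sum_cliqueDev_add_sum_compl (x : Fin n → ℝ) (S : Finset (Fin n)) :
    ∑ j ∈ S, cliqueDev n x j + ∑ j ∈ Sᶜ, x j = (n - #S) * cliqueAvg n x := by
  have h := sum_add_sum_compl S x
  rw [sum_eq_mul_cliqueAvg] at h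
  simp only [cliqueDev, sum_sub_distrib, sum_const, nsmul_eq_mul]
  linarith

lemma sum_sq_eq_dispersion_add (q : Fin n → ℝ) :
    ∑ j, q j ^ 2 = dispersion n q + n * cliqueAvg n q ^ 2 := by
  have hq : ∀ j, q j ^ 2 =
      cliqueDev n q j ^ 2 + 2 * cliqueAvg n q * cliqueDev n q j + cliqueAvg n q ^ 2 := by
    intro j
    rw [cliqueDev]
    ring
  simp [hq, sum_add_distrib, ← mul_sum, sum_cliqueDev, dispersion]

lemma dispersion_nonneg (x : Fin n → ℝ) : 0 ≤ dispersion n x :=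
  sum_nonneg fun _ _ => sq_nonneg _

lemma dispersion_le_sum_sq (q : Fin n → ℝ) : dispersion n q ≤ ∑ j, q j ^ 2 := by
  rw [sum_sq_eq_dispersion_add, le_add_iff_nonneg_right]
  positivity

lemma sq_cliqueAvg_le_sum_sq (q : Fin n → ℝ) : cliqueAvg n q ^ 2 ≤ ∑ j, q j ^ 2 := by
  rcases n.eq_zero_or_pos with rfl | hn
  · simp [cliqueAvg]
  · have : (1 : ℝ) ≤ n := by exact_mod_cast hn
    rw [sum_sq_eq_dispersion_add]
    have := dispersion_nonneg q
    nlinarith [sq_nonneg (cliqueAvg n q)]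

lemma dispersion_sub_mul (x q : Fin n → ℝ) (c : ℝ) :
    dispersion n (fun j => x j - c * q j) =
      dispersion n x - 2 * c * ∑ j, cliqueDev n x j * q j + c ^ 2 * dispersion n q := by
  have hcross : ∑ j, cliqueDev n x j * cliqueDev n q j = ∑ j, cliqueDev n x j * q j := by
    have h : ∀ j, cliqueDev n x j * cliqueDev n q j =
        cliqueDev n x j * q j - cliqueAvg n q * cliqueDev n x j := fun j => by
      unfold cliqueDev
      ring
    simp [h, sum_sub_distrib, ← mul_sum, sum_cliqueDev]
  have h : ∀ j, (cliqueDev n x j - c * cliqueDev n q j) ^ 2 = cliqueDev n x j ^ 2 -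
      2 * c * (cliqueDev n x j * cliqueDev n q j) + c ^ 2 * cliqueDev n q j ^ 2 := fun j => by
    ring
  simp only [dispersion, cliqueDev_sub_mul, h, sum_add_distrib, sum_sub_distrib, ← mul_sum, hcross]

variable {δ η : ℝ}

noncomputable def activeDev (n : ℕ) (η : ℝ) (x : Fin n → ℝ) (j : Fin n) : ℝ :=
  if |cliqueDev n x j| ≤ η then cliqueDev n x j else 0

noncomputable def activeEnergy (n : ℕ) (η : ℝ) (x : Fin n → ℝ) : ℝ :=
  ∑ j, activeDev n η x j ^ 2

noncomputable def activeSet (n : ℕ) (η : ℝ) (x : Fin n → ℝ) : Finset (Fin n) :=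
  {j | |cliqueDev n x j| ≤ η}

noncomputable def fcStep (n : ℕ) (δ η : ℝ) (x : Fin n → ℝ) : Fin n → ℝ :=
  fun j => x j - δ * activeDev n η x j

lemma activeDev_of_mem {x : Fin n → ℝ} {j : Fin n} (hj : j ∈ activeSet n η x) :
    activeDev n η x j = cliqueDev n x j := by
  simp_all [activeSet, activeDev]

lemma activeDev_of_notMem {x : Fin n → ℝ} {j : Fin n} (hj : j ∉ activeSet n η x) :
    activeDev n η x j = 0 := by
  simp_all [activeSet, activeDev]

lemma cliqueDev_mul_activeDev (x : Fin n → ℝ) (j : Fin n) :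
    cliqueDev n x j * activeDev n η x j = activeDev n η x j ^ 2 := by
  unfold activeDev
  split_ifs <;> ring

lemma activeEnergy_nonneg (x : Fin n → ℝ) : 0 ≤ activeEnergy n η x :=
  sum_nonneg fun _ _ => sq_nonneg _

lemma sq_activeDev_le_activeEnergy (x : Fin n → ℝ) (j : Fin n) :
    activeDev n η x j ^ 2 ≤ activeEnergy n η x :=
  single_le_sum (f := fun j => activeDev n η x j ^ 2) (fun _ _ => sq_nonneg _) (mem_univ j)

lemma dispersion_fcStep_add_le (x : Fin n → ℝ) :
    dispersion n (fcStep n δ η x) + δ * (2 - δ) * activeEnergy n η x ≤ dispersion n x := by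
  have h := dispersion_le_sum_sq (activeDev n η x)
  unfold fcStep
  rw [dispersion_sub_mul]
  simp only [cliqueDev_mul_activeDev]
  rw [← activeEnergy] at h ⊢
  nlinarith [sq_nonneg δ]

lemma cliqueAvg_fcStep_of_activeSet_eq_univ {x : Fin n → ℝ} (hx : activeSet n η x = univ) :
    cliqueAvg n (fcStep n δ η x) = cliqueAvg n x := by
  have h : activeDev n η x = cliqueDev n x := funext fun j => activeDev_of_mem (hx ▸ mem_univ j)
  unfold fcStep
  rw [cliqueAvg_sub_mul, h, cliqueAvg_cliqueDev, mul_zero, sub_zero]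

lemma activeSet_fcStep_subset (hδ : |δ| ≤ 1) {x : Fin n → ℝ}
    (hx : activeEnergy n η x < (η / 3) ^ 2)
    (hstep : activeEnergy n η (fcStep n δ η x) < (η / 3) ^ 2) :
    activeSet n η (fcStep n δ η x) ⊆ activeSet n η x := by
  intro j hj
  by_contra hj'
  have hη : 0 ≤ η := (abs_nonneg _).trans (mem_filter.1 hj).2
  have hdrift : |δ * cliqueAvg n (activeDev n η x)| < η / 3 := by
    refine abs_lt_of_sq_lt_sq ?_ (by positivity)
    have hδ2 : δ ^ 2 ≤ 1 := by rw [← sq_abs]; nlinarith [abs_nonneg δ]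
    calc (δ * cliqueAvg n (activeDev n η x)) ^ 2
        = δ ^ 2 * cliqueAvg n (activeDev n η x) ^ 2 := by ring
      _ ≤ cliqueAvg n (activeDev n η x) ^ 2 := mul_le_of_le_one_left (sq_nonneg _) hδ2
      _ ≤ activeEnergy n η x := sq_cliqueAvg_le_sum_sq _
      _ < (η / 3) ^ 2 := hx
  have hnew : |cliqueDev n (fcStep n δ η x) j| < η / 3 := by
    refine abs_lt_of_sq_lt_sq ?_ (by positivity)
    rw [← activeDev_of_mem hj]
    exact (sq_activeDev_le_activeEnergy _ j).trans_lt hstep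
  have hdev : cliqueDev n (fcStep n δ η x) j =
      cliqueDev n x j + δ * cliqueAvg n (activeDev n η x) := by
    unfold fcStep
    rw [cliqueDev_sub_mul]
    simp only [cliqueDev, activeDev_of_notMem hj']
    ring
  have hold : η < |cliqueDev n x j| := by simpa [activeSet] using hj'
  have htri := abs_sub (cliqueDev n x j + δ * cliqueAvg n (activeDev n η x))
    (δ * cliqueAvg n (activeDev n η x))
  rw [add_sub_cancel_right] at htri
  rw [hdev] at hnew
  linarith

end Vectors

section Trajectory

variable {n : ℕ} {δ η : ℝ} {x0 : Fin n → ℝ}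

lemma fcTraj_succ (t : ℕ) : fcTraj n δ η x0 (t + 1) = fcStep n δ η (fcTraj n δ η x0 t) := by
  funext j
  by_cases h : |fcTraj n δ η x0 t j - cliqueAvg n (fcTraj n δ η x0 t)| ≤ η
  · simp only [fcTraj, fcStep, activeDev, cliqueDev, h, if_true]
    ring
  · simp only [fcTraj, fcStep, activeDev, cliqueDev, h, if_false]
    ring

lemma tendsto_activeEnergy_fcTraj (hδ0 : 0 < δ) (hδ2 : δ < 2) :
    Tendsto (fun t => activeEnergy n η (fcTraj n δ η x0 t)) atTop (𝓝 0) := by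
  have hc : 0 < δ * (2 - δ) := mul_pos hδ0 (by linarith)
  have h := tendsto_zero_of_add_le (u := fun t => dispersion n (fcTraj n δ η x0 t))
    (g := fun t => δ * (2 - δ) * activeEnergy n η (fcTraj n δ η x0 t))
    (fun _ => dispersion_nonneg _) (fun _ => mul_nonneg hc.le (activeEnergy_nonneg _))
    (fun t => by rw [fcTraj_succ]; exact dispersion_fcStep_add_le _)
  simpa only [inv_mul_cancel_left₀ hc.ne', mul_zero] using h.const_mul (δ * (2 - δ))⁻¹

lemma exists_activeSet_fcTraj_eq (hδ0 : 0 < δ) (hδ1 : δ ≤ 1) (hη : 0 < η) :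
    ∃ T S, ∀ t, T ≤ t → activeSet n η (fcTraj n δ η x0 t) = S := by
  obtain ⟨T, hT⟩ := eventually_atTop.1 <|
    (tendsto_activeEnergy_fcTraj hδ0 (by linarith)).eventually_lt_const
      (by positivity : (0 : ℝ) < (η / 3) ^ 2)
  have hanti : Antitone fun k => activeSet n η (fcTraj n δ η x0 (T + k)) := by
    refine antitone_nat_of_succ_le fun k => ?_
    have hnext := hT (T + k + 1) (by omega)
    rw [fcTraj_succ] at hnext
    rw [← add_assoc, fcTraj_succ]
    exact activeSet_fcStep_subset (by rwa [abs_of_pos hδ0]) (hT _ (by omega)) hnext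
  obtain ⟨k, hk⟩ := WellFoundedLT.antitone_chain_condition hanti
  refine ⟨T + k, activeSet n η (fcTraj n δ η x0 (T + k)), fun t ht => ?_⟩
  obtain ⟨m, rfl⟩ := Nat.exists_eq_add_of_le ht
  rw [add_assoc]
  exact (hk (k + m) (by omega)).symm

variable {T : ℕ} {S : Finset (Fin n)}

lemma fcTraj_eq_of_notMem (hS : ∀ t, T ≤ t → activeSet n η (fcTraj n δ η x0 t) = S)
    {j : Fin n} (hj : j ∉ S) {t : ℕ} (ht : T ≤ t) :
    fcTraj n δ η x0 t j = fcTraj n δ η x0 T j := by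
  induction t, ht using Nat.le_induction with
  | base => rfl
  | succ t ht ih =>
    rw [fcTraj_succ, fcStep, activeDev_of_notMem (hS t ht ▸ hj), mul_zero, sub_zero, ih]

lemma tendsto_cliqueDev_fcTraj_of_mem
    (hE : Tendsto (fun t => activeEnergy n η (fcTraj n δ η x0 t)) atTop (𝓝 0))
    (hS : ∀ t, T ≤ t → activeSet n η (fcTraj n δ η x0 t) = S) {j : Fin n} (hj : j ∈ S) :
    Tendsto (fun t => cliqueDev n (fcTraj n δ η x0 t) j) atTop (𝓝 0) := by
  refine squeeze_zero_norm' ?_ (by simpa using hE.sqrt)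
  filter_upwards [eventually_ge_atTop T] with t ht
  rw [Real.norm_eq_abs, ← Real.sqrt_sq_eq_abs, ← activeDev_of_mem (hS t ht ▸ hj)]
  exact Real.sqrt_le_sqrt (sq_activeDev_le_activeEnergy _ _)

lemma exists_tendsto_cliqueAvg_fcTraj
    (hE : Tendsto (fun t => activeEnergy n η (fcTraj n δ η x0 t)) atTop (𝓝 0))
    (hS : ∀ t, T ≤ t → activeSet n η (fcTraj n δ η x0 t) = S) :
    ∃ a, Tendsto (fun t => cliqueAvg n (fcTraj n δ η x0 t)) atTop (𝓝 a) := by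
  by_cases hSu : S = univ
  · refine ⟨cliqueAvg n (fcTraj n δ η x0 T),
      tendsto_atTop_of_eventually_const (i₀ := T) fun t ht => ?_⟩
    induction t, ht using Nat.le_induction with
    | base => rfl
    | succ t ht ih => rw [fcTraj_succ, cliqueAvg_fcStep_of_activeSet_eq_univ (hSu ▸ hS t ht), ih]
  · have hcard : (#S : ℝ) < n := by
      simpa using (card_lt_iff_ne_univ S).2 hSu
    set F := ∑ j ∈ Sᶜ, fcTraj n δ η x0 T j
    have hlim := ((tendsto_finsetSum S fun j hj =>
      tendsto_cliqueDev_fcTraj_of_mem hE hS hj).add_const F).div_const (n - #S : ℝ)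
    refine ⟨_, hlim.congr' ?_⟩
    filter_upwards [eventually_ge_atTop T] with t ht
    rw [div_eq_iff (sub_pos.2 hcard).ne', mul_comm, ← sum_cliqueDev_add_sum_compl]
    congr 1
    exact sum_congr rfl fun j hj => (fcTraj_eq_of_notMem hS (mem_compl.1 hj) ht).symm

end Trajectory

theorem stmt0_general (n : ℕ) (δ η : ℝ) (hδ0 : 0 < δ) (hδ1 : δ < 1) (hη : 0 < η) :
    ∀ᵐ x0 ∂((volume : Measure (Fin n → ℝ)).restrict (Set.univ.pi fun _ => Set.Icc (0:ℝ) 1)),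
      ∀ i : Fin n, ∃ L : ℝ, Tendsto (fun t => fcTraj n δ η x0 t i) atTop (nhds L) := by
  refine ae_of_all _ fun x0 i => ?_
  have hE := tendsto_activeEnergy_fcTraj (η := η) (x0 := x0) hδ0 (by linarith)
  obtain ⟨T, S, hS⟩ := exists_activeSet_fcTraj_eq (x0 := x0) hδ0 hδ1.le hη
  by_cases hi : i ∈ S
  · obtain ⟨a, ha⟩ := exists_tendsto_cliqueAvg_fcTraj hE hS
    refine ⟨a + 0, (ha.add (tendsto_cliqueDev_fcTraj_of_mem hE hS hi)).congr fun t => ?_⟩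
    rw [cliqueDev]
    ring
  · exact ⟨_, tendsto_atTop_of_eventually_const fun t ht => fcTraj_eq_of_notMem hS hi ht⟩

/-- for `m = n`, almost every initial vector in `[0,1]^n` (w.r.t. `n`-dimensional
Lebesgue measure) leads all node states to converge to finite limits. -/
theorem stmt0 (n : ℕ) (hn : 2 ≤ n) (δ η : ℝ) (hδ0 : 0 < δ) (hδ1 : δ < 1) (hη : 0 < η) :
    ∀ᵐ x0 ∂((volume : Measure (Fin n → ℝ)).restrict (Set.univ.pi fun _ => Set.Icc (0:ℝ) 1)),
      ∀ i : Fin n, ∃ L : ℝ, Tendsto (fun t => fcTraj n δ η x0 t i) atTop (nhds L) :=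
  stmt0_general n δ η hδ0 hδ1 hη
end

section
/- Suppose m = n, n ≥ 4 and η < 1/(n+1). Let μ be the uniform probability measure (n-dimensional Lebesgue measure) on [0,1]^n, and let E_consensus be the set of initial vectors x(0) ∈ [0,1]^n for which there exists c ∈ ℝ with lim_{t→∞} x_i(t) = c for every i ∈ {1,…,n}. Then 0 < μ(E_consensus) < 1. -/
open Filter MeasureTheory

lemma fc_frozen (n : ℕ) (δ η : ℝ) (x0 : Fin n → ℝ)
    (h : ∀ i, ¬ (|x0 i - cliqueAvg n x0| ≤ η)) : ∀ t, fcTraj n δ η x0 t = x0 := by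
  intro t
  induction t with
  | zero => rfl
  | succ t ih =>
    funext i
    show (if |fcTraj n δ η x0 t i - cliqueAvg n (fcTraj n δ η x0 t)| ≤ η then
        (1 - δ) * fcTraj n δ η x0 t i + δ * cliqueAvg n (fcTraj n δ η x0 t)
      else fcTraj n δ η x0 t i) = x0 i
    rw [ih, if_neg (h i)]

lemma fc_contract (n : ℕ) (hn : 0 < n) (δ η : ℝ) (hδ0 : 0 < δ) (hδ1 : δ < 1) (x0 : Fin n → ℝ)
    (h : ∀ i, |x0 i - cliqueAvg n x0| ≤ η) :
    ∀ t i, fcTraj n δ η x0 t i =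
      cliqueAvg n x0 + (1 - δ) ^ t * (x0 i - cliqueAvg n x0) := by
  set a := cliqueAvg n x0 with ha
  have hN : (n : ℝ) ≠ 0 := Nat.cast_ne_zero.mpr hn.ne'
  have hsum : ∑ j, x0 j = n * a := by rw [ha, cliqueAvg]; field_simp
  intro t
  induction t with
  | zero => intro i; simp [fcTraj]
  | succ t ih =>
    have havg : cliqueAvg n (fcTraj n δ η x0 t) = a := by
      rw [cliqueAvg]
      have : ∑ j, fcTraj n δ η x0 t j = n * a := by
        calc ∑ j, fcTraj n δ η x0 t j
            = ∑ j, (a + (1 - δ) ^ t * (x0 j - a)) := Finset.sum_congr rfl (fun j _ => ih j)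
          _ = n * a + (1 - δ) ^ t * ((∑ j, x0 j) - n * a) := by
              rw [Finset.sum_add_distrib, Finset.sum_const, ← Finset.mul_sum,
                Finset.sum_sub_distrib, Finset.sum_const]
              simp [Finset.card_univ, nsmul_eq_mul]
          _ = n * a := by rw [hsum]; ring
      rw [this]; field_simp
    intro i
    have hcond : |fcTraj n δ η x0 t i - a| ≤ η := by
      rw [ih i]
      have : |(1 - δ) ^ t * (x0 i - a)| ≤ |x0 i - a| := by
        rw [abs_mul, abs_pow, abs_of_nonneg (by linarith : (0:ℝ) ≤ 1 - δ)]
        calc (1 - δ) ^ t * |x0 i - a| ≤ 1 * |x0 i - a| := by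
              apply mul_le_mul_of_nonneg_right _ (abs_nonneg _)
              exact pow_le_one₀ (by linarith) (by linarith)
          _ = |x0 i - a| := one_mul _
      simpa using this.trans (h i)
    show (if |fcTraj n δ η x0 t i - cliqueAvg n (fcTraj n δ η x0 t)| ≤ η then
        (1 - δ) * fcTraj n δ η x0 t i + δ * cliqueAvg n (fcTraj n δ η x0 t)
      else fcTraj n δ η x0 t i) = a + (1 - δ) ^ (t+1) * (x0 i - a)
    rw [havg, if_pos hcond, ih i]; ring

lemma avg_mem_Icc (n : ℕ) (hn : 0 < n) (lo hi : ℝ) (x : Fin n → ℝ)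
    (h : ∀ i, x i ∈ Set.Icc lo hi) : cliqueAvg n x ∈ Set.Icc lo hi := by
  have hN : (0:ℝ) < n := Nat.cast_pos.mpr hn
  rw [cliqueAvg]
  constructor
  · rw [le_div_iff₀ hN]
    calc lo * n = ∑ _j : Fin n, lo := by simp [Finset.card_univ, mul_comm]
      _ ≤ ∑ j, x j := Finset.sum_le_sum (fun j _ => (h j).1)
  · rw [div_le_iff₀ hN]
    calc ∑ j, x j ≤ ∑ _j : Fin n, hi := Finset.sum_le_sum (fun j _ => (h j).2)
      _ = hi * n := by simp [Finset.card_univ, mul_comm]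

set_option maxHeartbeats 1000000 in
theorem stmt1 (n : ℕ) (hn : 4 ≤ n) (δ η : ℝ) (hδ0 : 0 < δ) (hδ1 : δ < 1) (hη0 : 0 < η)
    (hη : η < 1 / ((n : ℝ) + 1)) :
    0 < ((volume : Measure (Fin n → ℝ)).restrict (Set.univ.pi fun _ => Set.Icc (0:ℝ) 1))
        {x0 | ∃ c : ℝ, ∀ i : Fin n, Tendsto (fun t => fcTraj n δ η x0 t i) atTop (nhds c)} ∧
      ((volume : Measure (Fin n → ℝ)).restrict (Set.univ.pi fun _ => Set.Icc (0:ℝ) 1))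
        {x0 | ∃ c : ℝ, ∀ i : Fin n, Tendsto (fun t => fcTraj n δ η x0 t i) atTop (nhds c)} < 1 := by
  have hn0 : 0 < n := by omega
  set N : ℝ := (n : ℝ) with hNdef
  have hN4 : (4:ℝ) ≤ N := by rw [hNdef]; exact_mod_cast hn
  have hNpos : (0:ℝ) < N := by linarith
  have hNη : N * η < 1 := by
    have h1 : η * (N + 1) < 1 := by
      rw [lt_div_iff₀ (by linarith : (0:ℝ) < N + 1)] at hη; linarith
    nlinarith
  have hη5 : η < 1/5 := by
    have : 1 / (N + 1) ≤ 1/5 := by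
      apply div_le_div_of_nonneg_left (by norm_num) (by norm_num) (by linarith)
    linarith
  set ε : ℝ := (1 - N * η) / (2 * (N + 1)) with hεdef
  have hεeq : ε * (2 * (N + 1)) = 1 - N * η := by
    rw [hεdef]; field_simp
  have hε0 : 0 < ε := div_pos (by linarith) (by linarith)
  have hεle : ε * (2 * (N + 1)) ≤ 1 := by
    rw [hεeq]; nlinarith [mul_nonneg hNpos.le hη0.le]
  have hε10 : ε < 1/10 := by nlinarith
  set cube : Set (Fin n → ℝ) := Set.univ.pi fun _ => Set.Icc (0:ℝ) 1 with hcube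
  set E : Set (Fin n → ℝ) :=
    {x0 | ∃ c : ℝ, ∀ i : Fin n, Tendsto (fun t => fcTraj n δ η x0 t i) atTop (nhds c)} with hE
  set μ := (volume : Measure (Fin n → ℝ)).restrict cube with hμ
  -- consensus box
  set B : Set (Fin n → ℝ) := Set.univ.pi fun _ => Set.Icc (1/2 - η/4) (1/2 + η/4) with hB
  have hBE : B ⊆ E := by
    intro x hx
    have hmem : ∀ i, x i ∈ Set.Icc (1/2 - η/4) (1/2 + η/4) := fun i => hx i (Set.mem_univ i)
    have havg := avg_mem_Icc n hn0 _ _ x hmem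
    have hdev : ∀ i, |x i - cliqueAvg n x| ≤ η := by
      intro i
      rw [abs_sub_le_iff]
      have h1 := (hmem i).1; have h2 := (hmem i).2
      have h3 := havg.1; have h4 := havg.2
      constructor <;> linarith
    refine ⟨cliqueAvg n x, fun i => ?_⟩
    have hform := fc_contract n hn0 δ η hδ0 hδ1 x hdev
    have hT : Tendsto (fun t : ℕ => cliqueAvg n x + (1 - δ) ^ t * (x i - cliqueAvg n x)) atTop
        (nhds (cliqueAvg n x + 0 * (x i - cliqueAvg n x))) :=
      ((tendsto_pow_atTop_nhds_zero_of_lt_one (by linarith) (by linarith)).mul_const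
        _).const_add _
    rw [zero_mul, add_zero] at hT
    exact hT.congr (fun t => (hform t i).symm)
  -- frozen box
  set i0 : Fin n := ⟨0, by omega⟩ with hi0
  set i1 : Fin n := ⟨1, by omega⟩ with hi1
  set B' : Set (Fin n → ℝ) :=
    Set.univ.pi fun i => if i = i0 then Set.Icc (1-ε) 1 else Set.Icc 0 ε with hB'
  have hB'E : ∀ x ∈ B', x ∉ E := by
    intro x hx hxE
    have hx0 : x i0 ∈ Set.Icc (1-ε) 1 := by
      have h := hx i0 (Set.mem_univ i0)
      simpa using h
    have hxj : ∀ j, j ≠ i0 → x j ∈ Set.Icc (0:ℝ) ε := by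
      intro j hj
      have h := hx j (Set.mem_univ j)
      simpa [if_neg hj] using h
    have hnonneg : ∀ j, 0 ≤ x j := by
      intro j
      by_cases hj : j = i0
      · subst hj; linarith [hx0.1]
      · exact (hxj j hj).1
    have hslo : (1 - ε) ≤ ∑ j, x j :=
      le_trans hx0.1 (Finset.single_le_sum (fun j _ => hnonneg j) (Finset.mem_univ i0))
    have hshi : ∑ j, x j ≤ N * ε + (1 - ε) := by
      calc ∑ j, x j ≤ ∑ j : Fin n, (ε + if j = i0 then 1 - ε else 0) := by
            apply Finset.sum_le_sum
            intro j _
            by_cases hj : j = i0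
            · subst hj; rw [if_pos rfl]; linarith [hx0.2]
            · rw [if_neg hj]; simpa using (hxj j hj).2
        _ = N * ε + (1 - ε) := by
            rw [Finset.sum_add_distrib, Finset.sum_const, Finset.sum_ite_eq' Finset.univ i0]
            simp [Finset.card_univ, nsmul_eq_mul, hNdef]
    set a := cliqueAvg n x with hadef
    have halo : (1 - ε) / N ≤ a := by
      rw [hadef, cliqueAvg, hNdef] at *
      gcongr
    have hahi : a ≤ (N * ε + (1 - ε)) / N := by
      rw [hadef, cliqueAvg, hNdef] at *
      gcongr
    -- every agent is farther than η from the average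
    have hdev : ∀ i, ¬ (|x i - a| ≤ η) := by
      intro i hle
      by_cases hj : i = i0
      · -- x i0 - a > η
        subst hj
        have h1 : (N * ε + (1 - ε)) / N < 1 - ε - η := by
          rw [div_lt_iff₀ hNpos]
          nlinarith
        have h2 : η < x i0 - a := by
          have := hx0.1
          nlinarith [hahi]
        have := le_abs_self (x i0 - a)
        linarith
      · -- a - x i > η
        have h1 : η + ε < (1 - ε) / N := by
          rw [lt_div_iff₀ hNpos]
          nlinarith
        have h2 : η < a - x i := by
          have := (hxj i hj).2
          linarith [halo]
        have := neg_abs_le (x i - a)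
        have habs : a - x i ≤ |x i - a| := by
          rw [abs_sub_comm]; exact le_abs_self _
        linarith
    obtain ⟨c, hc⟩ := hxE
    have hfr := fc_frozen n δ η x hdev
    have hval : ∀ i : Fin n, x i = c := by
      intro i
      have : Tendsto (fun _ : ℕ => x i) atTop (nhds c) :=
        (hc i).congr (fun t => by rw [hfr t])
      exact tendsto_nhds_unique tendsto_const_nhds this
    have hne : i1 ≠ i0 := by
      simp [hi0, hi1, Fin.ext_iff]
    have hb1 := (hxj i1 hne).2
    have hb0 := hx0.1
    have e0 := hval i0
    have e1 := hval i1
    rw [e0] at hb0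
    rw [e1] at hb1
    linarith
  -- measure computations
  have hBmeas : MeasurableSet B :=
    MeasurableSet.univ_pi (fun _ => measurableSet_Icc)
  have hB'meas : MeasurableSet B' := by
    apply MeasurableSet.univ_pi
    intro i
    by_cases hi : i = i0
    · rw [if_pos hi]; exact measurableSet_Icc
    · rw [if_neg hi]; exact measurableSet_Icc
  have hBcube : B ⊆ cube := by
    apply Set.pi_mono
    intro i _
    apply Set.Icc_subset_Icc <;> linarith
  have hB'cube : B' ⊆ cube := by
    apply Set.pi_mono
    intro i _
    by_cases hi : i = i0
    · rw [if_pos hi]; apply Set.Icc_subset_Icc <;> linarith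
    · rw [if_neg hi]; apply Set.Icc_subset_Icc <;> linarith
  have hvolB : (volume : Measure (Fin n → ℝ)) B = ENNReal.ofReal (η/2) ^ n := by
    rw [hB, volume_pi_pi]
    have : ∀ i : Fin n, (volume (Set.Icc (1/2 - η/4) (1/2 + η/4)) : ENNReal)
        = ENNReal.ofReal (η/2) := by
      intro i
      rw [Real.volume_Icc]
      norm_num
      ring_nf
    rw [Finset.prod_congr rfl (fun i _ => this i), Finset.prod_const,
      Finset.card_univ, Fintype.card_fin]
  have hvolB' : (volume : Measure (Fin n → ℝ)) B' = ENNReal.ofReal ε ^ n := by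
    rw [hB', volume_pi_pi]
    have : ∀ i : Fin n, (volume (if i = i0 then Set.Icc (1-ε) 1 else Set.Icc 0 ε) : ENNReal)
        = ENNReal.ofReal ε := by
      intro i
      by_cases hi : i = i0
      · rw [if_pos hi, Real.volume_Icc]; norm_num
      · rw [if_neg hi, Real.volume_Icc]; norm_num
    rw [Finset.prod_congr rfl (fun i _ => this i), Finset.prod_const,
      Finset.card_univ, Fintype.card_fin]
  have hμB : μ B = ENNReal.ofReal (η/2) ^ n := by
    rw [hμ, Measure.restrict_apply hBmeas, Set.inter_eq_self_of_subset_left hBcube, hvolB]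
  have hμB' : μ B' = ENNReal.ofReal ε ^ n := by
    rw [hμ, Measure.restrict_apply hB'meas, Set.inter_eq_self_of_subset_left hB'cube, hvolB']
  have hμuniv : μ Set.univ = 1 := by
    rw [hμ, Measure.restrict_apply_univ, hcube, volume_pi_pi]
    simp [Real.volume_Icc]
  constructor
  · calc (0 : ENNReal) < ENNReal.ofReal (η/2) ^ n := by
          apply ENNReal.pow_pos
          exact ENNReal.ofReal_pos.mpr (by linarith)
      _ = μ B := hμB.symm
      _ ≤ μ E := measure_mono hBE
  · have hEsub : E ⊆ B'ᶜ := fun x hxE hxB' => hB'E x hxB' hxE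
    have hcompl : μ B'ᶜ = 1 - ENNReal.ofReal ε ^ n := by
      rw [measure_compl hB'meas (by rw [hμB']; exact ENNReal.pow_ne_top ENNReal.ofReal_ne_top),
        hμuniv, hμB']
    calc μ E ≤ μ B'ᶜ := measure_mono hEsub
      _ = 1 - ENNReal.ofReal ε ^ n := hcompl
      _ < 1 := by
          apply ENNReal.sub_lt_self ENNReal.one_ne_top one_ne_zero
          exact pow_ne_zero n (ENNReal.ofReal_pos.mpr hε0).ne'
end

section
/- Suppose m = n, n ≥ 4 and η < 1/(n+1). Let μ be the uniform probability measure (n-dimensional Lebesgue measure) on [0,1]^n, and let E_disagreement be the set of initial vectors x(0) ∈ [0,1]^n for which every limit B_i = lim_{t→∞} x_i(t) exists and the limits B_1, …, B_n are pairwise distinct. Then 0 < μ(E_disagreement) < 1. -/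
/-!
An agent farther than `η` from the average never moves, so a configuration in which every agent
is that far away is frozen, and if its opinions are distinct it lies in the disagreement event.
Frozen configurations form an open set, which meets the open unit cube because `η < 1/(n+1)`
(one opinion near `1`, all others near `0`); discarding the null set of vectors with a repeated
coordinate does not change its measure.
Conversely, if all opinions lie in `[0, η]`, every agent stays within `η` of the average forever:
the average is preserved and the deviations from it shrink by the factor `1 - δ` at every step.
These configurations reach consensus, so the box `[0, η]^n`, of positive measure, misses the
disagreement event.
-/

open Filter MeasureTheory

namespace FullClique

variable {n : ℕ} {δ η : ℝ}

theorem continuous_cliqueAvg : Continuous (cliqueAvg n) := by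
  unfold cliqueAvg; fun_prop

theorem cliqueAvg_add_mul_sub (x : Fin n → ℝ) (c : ℝ) :
    cliqueAvg n (fun i => cliqueAvg n x + c * (x i - cliqueAvg n x)) = cliqueAvg n x := by
  rcases Nat.eq_zero_or_pos n with rfl | hn
  · simp [cliqueAvg]
  · have hn' : (n : ℝ) ≠ 0 := by positivity
    simp only [cliqueAvg, Finset.sum_add_distrib, ← Finset.mul_sum, Finset.sum_sub_distrib,
      Finset.sum_const, Finset.card_univ, Fintype.card_fin, nsmul_eq_mul]
    field_simp
    ring

theorem cliqueAvg_mem_Icc [NeZero n] {x : Fin n → ℝ} {a b : ℝ}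
    (hx : ∀ i, x i ∈ Set.Icc a b) : cliqueAvg n x ∈ Set.Icc a b := by
  have hn : (0 : ℝ) < n := by simpa using NeZero.pos n
  have hle := Finset.sum_le_sum fun i (_ : i ∈ Finset.univ) => (hx i).2
  have hge := Finset.sum_le_sum fun i (_ : i ∈ Finset.univ) => (hx i).1
  simp only [Finset.sum_const, Finset.card_univ, Fintype.card_fin, nsmul_eq_mul] at hle hge
  constructor
  · rw [cliqueAvg, le_div_iff₀ hn]; linarith
  · rw [cliqueAvg, div_le_iff₀ hn]; linarith

theorem abs_sub_cliqueAvg_le_of_mem_Icc {x : Fin n → ℝ} {a b : ℝ}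
    (hx : ∀ i, x i ∈ Set.Icc a b) (i : Fin n) : |x i - cliqueAvg n x| ≤ b - a := by
  have : NeZero n := ⟨i.pos.ne'⟩
  have havg := cliqueAvg_mem_Icc hx
  rw [abs_le]
  constructor <;> linarith [(hx i).1, (hx i).2, havg.1, havg.2]

theorem fcTraj_eq_of_forall_lt_abs {x0 : Fin n → ℝ} (h : ∀ i, η < |x0 i - cliqueAvg n x0|)
    (t : ℕ) : fcTraj n δ η x0 t = x0 := by
  induction t with
  | zero => rfl
  | succ t ih =>
    funext i
    simp only [fcTraj, ih, if_neg (h i).not_ge]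

theorem fcTraj_eq_of_forall_abs_le (hδ0 : 0 ≤ δ) (hδ1 : δ ≤ 1) {x0 : Fin n → ℝ}
    (h : ∀ i, |x0 i - cliqueAvg n x0| ≤ η) (t : ℕ) (i : Fin n) :
    fcTraj n δ η x0 t i = cliqueAvg n x0 + (1 - δ) ^ t * (x0 i - cliqueAvg n x0) := by
  set a := cliqueAvg n x0
  induction t generalizing i with
  | zero => simp [fcTraj]
  | succ t ih =>
    have htraj : fcTraj n δ η x0 t = fun i => a + (1 - δ) ^ t * (x0 i - a) := funext ih
    have havg : cliqueAvg n (fcTraj n δ η x0 t) = a := by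
      rw [htraj]; exact cliqueAvg_add_mul_sub x0 _
    have hclose : |fcTraj n δ η x0 t i - a| ≤ η := by
      have hc : |(1 - δ) ^ t| ≤ 1 := by
        rw [abs_pow, abs_of_nonneg (by linarith)]; exact pow_le_one₀ (by linarith) (by linarith)
      rw [ih, add_sub_cancel_left, abs_mul]
      exact (mul_le_of_le_one_left (abs_nonneg _) hc).trans (h i)
    simp only [fcTraj]
    rw [havg, if_pos hclose, ih, pow_succ]
    ring

theorem tendsto_fcTraj_of_forall_abs_le (hδ0 : 0 < δ) (hδ1 : δ < 1) {x0 : Fin n → ℝ}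
    (h : ∀ i, |x0 i - cliqueAvg n x0| ≤ η) (i : Fin n) :
    Tendsto (fun t => fcTraj n δ η x0 t i) atTop (nhds (cliqueAvg n x0)) := by
  simp_rw [fcTraj_eq_of_forall_abs_le hδ0.le hδ1.le h]
  have hpow := tendsto_pow_atTop_nhds_zero_of_lt_one (sub_nonneg.2 hδ1.le) (sub_lt_self 1 hδ0)
  simpa using (hpow.mul_const (x0 i - cliqueAvg n x0)).const_add (cliqueAvg n x0)

def disagreementSet (n : ℕ) (δ η : ℝ) : Set (Fin n → ℝ) :=
  {x0 | ∃ B : Fin n → ℝ, Function.Injective B ∧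
    ∀ i : Fin n, Tendsto (fun t => fcTraj n δ η x0 t i) atTop (nhds (B i))}

def unitCube (n : ℕ) : Set (Fin n → ℝ) := Set.univ.pi fun _ => Set.Icc 0 1

theorem mem_disagreementSet_of_forall_lt_abs {x0 : Fin n → ℝ} (hinj : Function.Injective x0)
    (h : ∀ i, η < |x0 i - cliqueAvg n x0|) : x0 ∈ disagreementSet n δ η :=
  ⟨x0, hinj, fun i => by simp_rw [fcTraj_eq_of_forall_lt_abs h]; exact tendsto_const_nhds⟩

theorem notMem_disagreementSet_of_forall_abs_le (hn : 2 ≤ n) (hδ0 : 0 < δ) (hδ1 : δ < 1)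
    {x0 : Fin n → ℝ} (h : ∀ i, |x0 i - cliqueAvg n x0| ≤ η) :
    x0 ∉ disagreementSet n δ η := by
  rintro ⟨B, hB, hlim⟩
  have hconsensus (i : Fin n) : B i = cliqueAvg n x0 :=
    tendsto_nhds_unique (hlim i) (tendsto_fcTraj_of_forall_abs_le hδ0 hδ1 h i)
  have h01 : (⟨0, by omega⟩ : Fin n) ≠ ⟨1, by omega⟩ := by simp
  exact h01 (hB ((hconsensus _).trans (hconsensus _).symm))

theorem volume_setOf_not_injective {ι : Type*} [Fintype ι] :
    volume {x : ι → ℝ | ¬ Function.Injective x} = 0 := by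
  classical
  let diag (p : {p : ι × ι // p.1 ≠ p.2}) : Submodule ℝ (ι → ℝ) :=
    LinearMap.ker (LinearMap.proj (R := ℝ) (φ := fun _ => ℝ) p.1.1 - LinearMap.proj p.1.2)
  have hsub :
      {x : ι → ℝ | ¬ Function.Injective x} ⊆ ⋃ p, (diag p : Set (ι → ℝ)) := by
    intro x hx
    simp only [Function.Injective, not_forall] at hx
    obtain ⟨i, j, hxij, hij⟩ := hx
    exact Set.mem_iUnion.2 ⟨⟨(i, j), hij⟩, by simp [diag, hxij]⟩
  refine measure_mono_null hsub (measure_iUnion_null fun p => Measure.addHaar_submodule _ _ ?_)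
  intro htop
  have : Pi.single p.1.1 (1 : ℝ) ∈ diag p := htop ▸ Submodule.mem_top
  simp [diag, p.2.symm] at this

theorem isOpen_setOf_forall_lt_abs_sub_cliqueAvg :
    IsOpen {x : Fin n → ℝ | ∀ i, η < |x i - cliqueAvg n x|} := by
  simp only [Set.ofPred_forall]
  exact isOpen_iInter_of_finite fun i =>
    isOpen_lt continuous_const ((continuous_apply i).sub continuous_cliqueAvg).abs

theorem exists_forall_lt_abs_sub_cliqueAvg (hn : 2 ≤ n) (hη : η < 1 / ((n : ℝ) + 1)) :
    ∃ x : Fin n → ℝ, (∀ i, x i ∈ Set.Ioo 0 1) ∧ ∀ i, η < |x i - cliqueAvg n x| := by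
  let i₀ : Fin n := ⟨0, by omega⟩
  let x : Fin n → ℝ := fun i => (1 + 2 * n * if i = i₀ then 1 else 0) / (2 * (n + 1))
  have hn' : (2 : ℝ) ≤ n := by exact_mod_cast hn
  have hdev : ∀ i, x i - cliqueAvg n x = (n * (if i = i₀ then 1 else 0) - 1) / (n + 1) := by
    intro i
    have hsum : ∑ j, x j = 3 * n / (2 * (n + 1)) := by
      simp only [x, ← Finset.sum_div, Finset.sum_add_distrib, ← Finset.mul_sum,
        Finset.sum_ite_eq', Finset.mem_univ, if_true, Finset.sum_const, Finset.card_univ,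
        Fintype.card_fin, nsmul_eq_mul]
      ring
    rw [cliqueAvg, hsum]
    simp only [x]
    field_simp
    ring
  refine ⟨x, fun i => ⟨by positivity, ?_⟩, fun i => ?_⟩
  · rw [div_lt_one (by positivity)]
    split_ifs <;> linarith
  · rw [hdev]
    have h1 : 1 / ((n : ℝ) + 1) ≤ (n - 1) / (n + 1) := by gcongr; linarith
    split_ifs
    · rw [mul_one, abs_of_nonneg (by apply div_nonneg <;> linarith)]; linarith
    · rw [mul_zero, zero_sub, neg_div, abs_neg, abs_of_pos (by positivity)]; exact hη

theorem volume_disagreementSet_inter_unitCube_pos (hn : 2 ≤ n) (hη : η < 1 / ((n : ℝ) + 1)) :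
    0 < volume (disagreementSet n δ η ∩ unitCube n) := by
  obtain ⟨w, hw, hw_frozen⟩ := exists_forall_lt_abs_sub_cliqueAvg hn hη
  set U := (Set.univ.pi fun _ : Fin n => Set.Ioo (0 : ℝ) 1) ∩
    {x | ∀ i, η < |x i - cliqueAvg n x|}
  have hU_open : IsOpen U :=
    (isOpen_set_pi Set.finite_univ fun _ _ => isOpen_Ioo).inter
      isOpen_setOf_forall_lt_abs_sub_cliqueAvg
  have hU_sub : U \ {x | ¬ Function.Injective x} ⊆ disagreementSet n δ η ∩ unitCube n :=
    fun x ⟨⟨hx01, hx⟩, hinj⟩ => ⟨mem_disagreementSet_of_forall_lt_abs (not_not.1 hinj) hx,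
      fun i _ => Set.Ioo_subset_Icc_self (hx01 i trivial)⟩
  calc 0 < volume U := hU_open.measure_pos _ ⟨w, fun i _ => hw i, hw_frozen⟩
    _ = volume (U \ {x | ¬ Function.Injective x}) :=
      (measure_sdiff_null volume_setOf_not_injective).symm
    _ ≤ volume (disagreementSet n δ η ∩ unitCube n) := measure_mono hU_sub

theorem volume_restrict_unitCube_disagreementSet_lt_one (hn : 2 ≤ n) (hδ0 : 0 < δ)
    (hδ1 : δ < 1) (hη0 : 0 < η) (hη1 : η ≤ 1) :
    volume.restrict (unitCube n) (disagreementSet n δ η) < 1 := by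
  set T := Set.univ.pi fun _ : Fin n => Set.Icc (0 : ℝ) η
  have hT_meas : MeasurableSet T := MeasurableSet.univ_pi fun _ => measurableSet_Icc
  have hT_sub : T ⊆ unitCube n := Set.pi_mono fun _ _ => Set.Icc_subset_Icc_right hη1
  have hT_compl : disagreementSet n δ η ⊆ Tᶜ := fun x hx hxT =>
    notMem_disagreementSet_of_forall_abs_le hn hδ0 hδ1
      (by simpa using abs_sub_cliqueAvg_le_of_mem_Icc fun i => hxT i trivial) hx
  have hcube : volume (unitCube n) = 1 := by simp [unitCube, Real.volume_Icc_pi]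
  have hT_pos : 0 < volume T := by
    simpa [T, Real.volume_Icc_pi] using ENNReal.pow_pos (ENNReal.ofReal_pos.2 hη0) n
  calc volume.restrict (unitCube n) (disagreementSet n δ η)
      ≤ volume.restrict (unitCube n) Tᶜ := measure_mono hT_compl
    _ = volume (unitCube n \ T) := by
      rw [Measure.restrict_apply hT_meas.compl, Set.inter_comm, Set.sdiff_eq]
    _ = 1 - volume T := by
      rw [measure_sdiff hT_sub hT_meas.nullMeasurableSet
        (measure_ne_top_of_subset hT_sub (hcube ▸ ENNReal.one_ne_top)), hcube]
    _ < 1 := ENNReal.sub_lt_self ENNReal.one_ne_top one_ne_zero hT_pos.ne'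

end FullClique

open FullClique in
/-- for `m = n`, `n ≥ 4`, `η < 1/(n+1)`, the disagreement-clustering event
(all limits exist and are pairwise distinct) has probability strictly between 0 and 1
under the uniform measure on `[0,1]^n`. -/
theorem stmt2 (n : ℕ) (hn : 4 ≤ n) (δ η : ℝ) (hδ0 : 0 < δ) (hδ1 : δ < 1) (hη0 : 0 < η)
    (hη : η < 1 / ((n : ℝ) + 1)) :
    0 < ((volume : Measure (Fin n → ℝ)).restrict (Set.univ.pi fun _ => Set.Icc (0:ℝ) 1))
        {x0 | ∃ B : Fin n → ℝ, Function.Injective B ∧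
          ∀ i : Fin n, Tendsto (fun t => fcTraj n δ η x0 t i) atTop (nhds (B i))} ∧
      ((volume : Measure (Fin n → ℝ)).restrict (Set.univ.pi fun _ => Set.Icc (0:ℝ) 1))
        {x0 | ∃ B : Fin n → ℝ, Function.Injective B ∧
          ∀ i : Fin n, Tendsto (fun t => fcTraj n δ η x0 t i) atTop (nhds (B i))} < 1 := by
  change 0 < volume.restrict (unitCube n) (disagreementSet n δ η) ∧
    volume.restrict (unitCube n) (disagreementSet n δ η) < 1
  have hn2 : 2 ≤ n := by omega
  have hη1 : η ≤ 1 :=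
    hη.le.trans (div_le_one_of_le₀ (le_add_of_nonneg_left n.cast_nonneg) (by positivity))
  exact ⟨(volume_disagreementSet_inter_unitCube_pos hn2 hη).trans_le
      (Measure.le_restrict_apply _ _),
    volume_restrict_unitCube_disagreementSet_lt_one hn2 hδ0 hδ1 hη0 hη1⟩
end

section
/- Suppose m = n and the initial values are sorted: x_1(0) ≤ x_2(0) ≤ … ≤ x_n(0). Let k ∈ {1,…,n} and set Δ = x̄(0) − x_k(0). Assume 0 ≤ Δ ≤ η and, for every index s ≠ k, |x_s(0) − x̄(0)| > η + Δ/(n−1). Then: (i) the order of node states is preserved for all times, i.e., x_i(t) ≤ x_j(t) for all t ≥ 0 and all i ≤ j; (ii) x_j(t) = x_j(0) for all j ≠ k and all t ≥ 0; and (iii) lim_{t→∞} x_k(t) = lim_{t→∞} x̄(t) = x̄(0) + Δ/(n−1). -/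
open Filter MeasureTheory

/-!
While every node other than `k` is farther than `η` from the average, only `x_k` moves, and it
moves by `δ` times its gap `g = x̄ − x_k` to the average. Since `x̄` then moves by `δ g / n`, the
gap contracts by the factor `1 − δ (n−1)/n` at each step, so `g(t) = Δ (1 − δ (n−1)/n)^t`. The
identity `(n−1)(x̄(t) − x̄(0)) = Δ − g(t)` keeps the average within `Δ/(n−1)` of `x̄(0)`, which
by the separation hypothesis keeps the other nodes frozen, and gives the limit `x̄(0) + Δ/(n−1)`.
-/

theorem Monotone.of_eq_off {ι α : Type*} [PartialOrder ι] [Preorder α] {x y : ι → α} {k : ι}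
    (hx : Monotone x) (h : ∀ j ≠ k, y j = x j) (hk : x k ≤ y k) (hup : ∀ j, k < j → y k ≤ x j) :
    Monotone y := by
  intro i j hij
  rcases eq_or_ne k i with rfl | hi <;> rcases eq_or_ne k j with rfl | hj
  · exact le_rfl
  · rw [h j hj.symm]
    exact hup j (lt_of_le_of_ne hij hj)
  · rw [h i hi.symm]
    exact (hx hij).trans hk
  · rw [h i hi.symm, h j hj.symm]
    exact hx hij

section AgreeOff

variable {n : ℕ} {x y : Fin n → ℝ} {k : Fin n}

theorem cliqueAvg_sub_cliqueAvg_of_eq_off (h : ∀ j ≠ k, y j = x j) :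
    cliqueAvg n y - cliqueAvg n x = (y k - x k) / n := by
  unfold cliqueAvg
  rw [← sub_div, ← Finset.sum_sub_distrib,
    Finset.sum_eq_single k (fun j _ hj => by rw [h j hj, sub_self]) (by simp)]

theorem sub_one_mul_cliqueAvg_sub_of_eq_off (h : ∀ j ≠ k, y j = x j) :
    ((n : ℝ) - 1) * (cliqueAvg n y - cliqueAvg n x) =
      (cliqueAvg n x - x k) - (cliqueAvg n y - y k) := by
  have hn : (n : ℝ) ≠ 0 := Nat.cast_ne_zero.mpr (Fin.pos k).ne'
  have hdiff := cliqueAvg_sub_cliqueAvg_of_eq_off h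
  field_simp at hdiff
  linear_combination hdiff

theorem cliqueAvg_mem_Icc_of_eq_off (hn : 2 ≤ n) (h : ∀ j ≠ k, y j = x j)
    (hgap0 : 0 ≤ cliqueAvg n y - y k) (hgap : cliqueAvg n y - y k ≤ cliqueAvg n x - x k) :
    cliqueAvg n y ∈
      Set.Icc (cliqueAvg n x) (cliqueAvg n x + (cliqueAvg n x - x k) / ((n : ℝ) - 1)) := by
  have hn1 : (0 : ℝ) < n - 1 := by
    have : (2 : ℝ) ≤ n := by exact_mod_cast hn
    linarith
  have key := sub_one_mul_cliqueAvg_sub_of_eq_off h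
  constructor
  · have := (mul_nonneg_iff_of_pos_left hn1).mp (by linarith : 0 ≤ ((n : ℝ) - 1) *
      (cliqueAvg n y - cliqueAvg n x))
    linarith
  · rw [← sub_le_iff_le_add', le_div_iff₀ hn1]
    linarith

theorem apply_le_apply_of_eq_off (h : ∀ j ≠ k, y j = x j) (hxy : cliqueAvg n x ≤ cliqueAvg n y) :
    x k ≤ y k := by
  have hn : (0 : ℝ) < n := Nat.cast_pos.mpr (Fin.pos k)
  have := cliqueAvg_sub_cliqueAvg_of_eq_off h
  rw [eq_div_iff hn.ne'] at this
  nlinarith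

theorem tendsto_of_eq_off_of_gap_tendsto_zero (hn : 2 ≤ n) {y : ℕ → Fin n → ℝ}
    (h : ∀ t, ∀ j ≠ k, y t j = x j)
    (hgap : Tendsto (fun t => cliqueAvg n (y t) - y t k) atTop (nhds 0)) :
    Tendsto (fun t => cliqueAvg n (y t)) atTop
        (nhds (cliqueAvg n x + (cliqueAvg n x - x k) / ((n : ℝ) - 1))) ∧
      Tendsto (fun t => y t k) atTop
        (nhds (cliqueAvg n x + (cliqueAvg n x - x k) / ((n : ℝ) - 1))) := by
  have hn1 : (n : ℝ) - 1 ≠ 0 := by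
    have : (2 : ℝ) ≤ n := by exact_mod_cast hn
    linarith
  have havg : (fun t => cliqueAvg n (y t)) = fun t =>
      cliqueAvg n x + ((cliqueAvg n x - x k) - (cliqueAvg n (y t) - y t k)) / ((n : ℝ) - 1) := by
    funext t
    rw [← sub_one_mul_cliqueAvg_sub_of_eq_off (h t)]
    field_simp
    ring
  have hlim := ((hgap.const_sub (cliqueAvg n x - x k)).div_const ((n : ℝ) - 1)).const_add
    (cliqueAvg n x)
  rw [sub_zero, ← havg] at hlim
  refine ⟨hlim, ?_⟩
  simpa using hlim.sub hgap

end AgreeOff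

theorem cliqueAvg_add_lt_of_sep {n : ℕ} {x : Fin n → ℝ} {k j : Fin n} {η : ℝ} (hx : Monotone x)
    (hkj : k < j) (hΔ0 : 0 ≤ cliqueAvg n x - x k) (hΔη : cliqueAvg n x - x k ≤ η)
    (hsep : η + (cliqueAvg n x - x k) / ((n : ℝ) - 1) < |x j - cliqueAvg n x|) :
    cliqueAvg n x + (cliqueAvg n x - x k) / ((n : ℝ) - 1) < x j := by
  have hq : 0 ≤ (cliqueAvg n x - x k) / ((n : ℝ) - 1) :=
    div_nonneg hΔ0 (sub_nonneg.mpr (Nat.one_le_cast.mpr (Fin.pos k)))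
  rcases le_or_gt (cliqueAvg n x) (x j) with hA | hA
  · rw [abs_of_nonneg (sub_nonneg.mpr hA)] at hsep
    linarith
  · rw [abs_of_neg (sub_neg.mpr hA)] at hsep
    linarith [hx hkj.le]

section Dynamics

variable {n : ℕ} {δ η : ℝ} {x0 : Fin n → ℝ} {t : ℕ} {i : Fin n}

theorem fcTraj_succ_of_abs_le
    (h : |fcTraj n δ η x0 t i - cliqueAvg n (fcTraj n δ η x0 t)| ≤ η) :
    fcTraj n δ η x0 (t + 1) i = fcTraj n δ η x0 t i +
      δ * (cliqueAvg n (fcTraj n δ η x0 t) - fcTraj n δ η x0 t i) := by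
  rw [fcTraj]
  dsimp only
  rw [if_pos h]
  ring

theorem fcTraj_succ_of_lt_abs
    (h : η < |fcTraj n δ η x0 t i - cliqueAvg n (fcTraj n δ η x0 t)|) :
    fcTraj n δ η x0 (t + 1) i = fcTraj n δ η x0 t i := by
  rw [fcTraj]
  exact if_neg h.not_ge

noncomputable def gapFactor (n : ℕ) (δ : ℝ) : ℝ := 1 - δ * ((n : ℝ) - 1) / n

theorem gapFactor_nonneg (hδ : δ ≤ 1) : 0 ≤ gapFactor n δ := by
  unfold gapFactor
  rcases Nat.eq_zero_or_pos n with rfl | hn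
  · simp
  · rw [sub_nonneg, div_le_one (by positivity)]
    nlinarith [(Nat.one_le_cast (α := ℝ)).mpr hn]

theorem gapFactor_lt_one (hn : 2 ≤ n) (hδ : 0 < δ) : gapFactor n δ < 1 := by
  have hn2 : (2 : ℝ) ≤ n := by exact_mod_cast hn
  have : 0 < δ * ((n : ℝ) - 1) / n := div_pos (mul_pos hδ (by linarith)) (by linarith)
  unfold gapFactor
  linarith

theorem mul_gapFactor_pow_mem_Icc (hn : 2 ≤ n) (hδ0 : 0 < δ) (hδ1 : δ < 1) {D : ℝ} (hD : 0 ≤ D)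
    (t : ℕ) : D * gapFactor n δ ^ t ∈ Set.Icc 0 D :=
  have hL0 : 0 ≤ gapFactor n δ := gapFactor_nonneg hδ1.le
  ⟨mul_nonneg hD (pow_nonneg hL0 t),
    mul_le_of_le_one_right hD (pow_le_one₀ hL0 (gapFactor_lt_one hn hδ0).le)⟩

theorem fcTraj_eq_off_and_gap (hn : 2 ≤ n) (hδ0 : 0 < δ) (hδ1 : δ < 1) {k : Fin n}
    (hΔ0 : 0 ≤ cliqueAvg n x0 - x0 k) (hΔη : cliqueAvg n x0 - x0 k ≤ η)
    (hsep : ∀ s ≠ k,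
      η + (cliqueAvg n x0 - x0 k) / ((n : ℝ) - 1) < |x0 s - cliqueAvg n x0|) (t : ℕ) :
    (∀ j ≠ k, fcTraj n δ η x0 t j = x0 j) ∧
      cliqueAvg n (fcTraj n δ η x0 t) - fcTraj n δ η x0 t k =
        (cliqueAvg n x0 - x0 k) * gapFactor n δ ^ t := by
  induction t with
  | zero => exact ⟨fun _ _ => rfl, by simp [fcTraj]⟩
  | succ t ih =>
    obtain ⟨hfix, hgap⟩ := ih
    set D := cliqueAvg n x0 - x0 k
    set g := D * gapFactor n δ ^ t
    obtain ⟨hg0, hgD⟩ := mul_gapFactor_pow_mem_Icc hn hδ0 hδ1 hΔ0 t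
    obtain ⟨havg0, havg1⟩ := cliqueAvg_mem_Icc_of_eq_off hn hfix (hgap ▸ hg0) (hgap ▸ hgD)
    have hfix' : ∀ j ≠ k, fcTraj n δ η x0 (t + 1) j = x0 j := by
      intro j hj
      have hfar : η < |fcTraj n δ η x0 t j - cliqueAvg n (fcTraj n δ η x0 t)| := by
        have := abs_sub_le (x0 j) (cliqueAvg n (fcTraj n δ η x0 t)) (cliqueAvg n x0)
        rw [abs_of_nonneg (sub_nonneg.2 havg0)] at this
        rw [hfix j hj]
        linarith [hsep j hj]
      rw [fcTraj_succ_of_lt_abs hfar, hfix j hj]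
    have hk : fcTraj n δ η x0 (t + 1) k = fcTraj n δ η x0 t k + δ * g := by
      have hnear : |fcTraj n δ η x0 t k - cliqueAvg n (fcTraj n δ η x0 t)| ≤ η := by
        rw [abs_sub_comm, hgap, abs_of_nonneg hg0]
        linarith
      rw [fcTraj_succ_of_abs_le hnear, hgap]
    have hstep := cliqueAvg_sub_cliqueAvg_of_eq_off (k := k) (x := fcTraj n δ η x0 t)
      (y := fcTraj n δ η x0 (t + 1)) (fun j hj => by rw [hfix' j hj, hfix j hj])
    refine ⟨hfix', ?_⟩
    rw [hk, add_sub_cancel_left] at hstep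
    calc cliqueAvg n (fcTraj n δ η x0 (t + 1)) - fcTraj n δ η x0 (t + 1) k
        = (cliqueAvg n (fcTraj n δ η x0 (t + 1)) - cliqueAvg n (fcTraj n δ η x0 t)) +
            (cliqueAvg n (fcTraj n δ η x0 t) - fcTraj n δ η x0 t k) - δ * g := by rw [hk]; ring
      _ = g * gapFactor n δ := by rw [hstep, hgap, gapFactor]; field_simp; ring
      _ = D * gapFactor n δ ^ (t + 1) := by rw [pow_succ, ← mul_assoc]

end Dynamics

theorem stmt3_general (n : ℕ) (hn : 2 ≤ n) (δ η : ℝ) (hδ0 : 0 < δ) (hδ1 : δ < 1)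
    (x0 : Fin n → ℝ) (hsorted : Monotone x0) (k : Fin n)
    (hΔ0 : 0 ≤ cliqueAvg n x0 - x0 k) (hΔη : cliqueAvg n x0 - x0 k ≤ η)
    (hsep : ∀ s : Fin n, s ≠ k →
      η + (cliqueAvg n x0 - x0 k) / ((n : ℝ) - 1) < |x0 s - cliqueAvg n x0|) :
    (∀ t : ℕ, ∀ i j : Fin n, i ≤ j → fcTraj n δ η x0 t i ≤ fcTraj n δ η x0 t j) ∧
    (∀ j : Fin n, j ≠ k → ∀ t : ℕ, fcTraj n δ η x0 t j = x0 j) ∧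
    Tendsto (fun t => fcTraj n δ η x0 t k) atTop
      (nhds (cliqueAvg n x0 + (cliqueAvg n x0 - x0 k) / ((n : ℝ) - 1))) ∧
    Tendsto (fun t => cliqueAvg n (fcTraj n δ η x0 t)) atTop
      (nhds (cliqueAvg n x0 + (cliqueAvg n x0 - x0 k) / ((n : ℝ) - 1))) := by
  obtain ⟨hfix, hgap⟩ := forall_and.mp (fcTraj_eq_off_and_gap (η := η) hn hδ0 hδ1 hΔ0 hΔη hsep)
  have hgap_mem t := hgap t ▸ mul_gapFactor_pow_mem_Icc hn hδ0 hδ1 hΔ0 t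
  have hmono t : Monotone (fcTraj n δ η x0 t) := by
    obtain ⟨hlo, hhi⟩ := cliqueAvg_mem_Icc_of_eq_off hn (hfix t) (hgap_mem t).1 (hgap_mem t).2
    refine hsorted.of_eq_off (hfix t) (apply_le_apply_of_eq_off (hfix t) hlo) fun j hkj => ?_
    linarith [cliqueAvg_add_lt_of_sep hsorted hkj hΔ0 hΔη (hsep j hkj.ne'), (hgap_mem t).1]
  have hgap_lim : Tendsto (fun t => cliqueAvg n (fcTraj n δ η x0 t) - fcTraj n δ η x0 t k)
      atTop (nhds 0) := by
    simpa [hgap] using (tendsto_pow_atTop_nhds_zero_of_lt_one (gapFactor_nonneg hδ1.le)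
      (gapFactor_lt_one hn hδ0)).const_mul (cliqueAvg n x0 - x0 k)
  obtain ⟨havg_lim, hk_lim⟩ := tendsto_of_eq_off_of_gap_tendsto_zero hn hfix hgap_lim
  exact ⟨fun t i j hij => hmono t hij, fun j hj t => hfix t j hj, hk_lim, havg_lim⟩

/-- for `m = n` with sorted initial values, if `Δ = x̄(0) − x_k(0)` satisfies
`0 ≤ Δ ≤ η` and every other initial opinion is farther than `η + Δ/(n−1)` from the average,
then the order of node states is preserved for all time, all nodes other than `k` keep their
initial values, and `x_k(t)` and `x̄(t)` both converge to `x̄(0) + Δ/(n−1)`. -/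
theorem stmt3 (n : ℕ) (hn : 2 ≤ n) (δ η : ℝ) (hδ0 : 0 < δ) (hδ1 : δ < 1) (hη0 : 0 < η)
    (x0 : Fin n → ℝ) (hsorted : Monotone x0) (k : Fin n)
    (hΔ0 : 0 ≤ cliqueAvg n x0 - x0 k) (hΔη : cliqueAvg n x0 - x0 k ≤ η)
    (hsep : ∀ s : Fin n, s ≠ k →
      η + (cliqueAvg n x0 - x0 k) / ((n : ℝ) - 1) < |x0 s - cliqueAvg n x0|) :
    (∀ t : ℕ, ∀ i j : Fin n, i ≤ j → fcTraj n δ η x0 t i ≤ fcTraj n δ η x0 t j) ∧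
    (∀ j : Fin n, j ≠ k → ∀ t : ℕ, fcTraj n δ η x0 t j = x0 j) ∧
    Tendsto (fun t => fcTraj n δ η x0 t k) atTop
      (nhds (cliqueAvg n x0 + (cliqueAvg n x0 - x0 k) / ((n : ℝ) - 1))) ∧
    Tendsto (fun t => cliqueAvg n (fcTraj n δ η x0 t)) atTop
      (nhds (cliqueAvg n x0 + (cliqueAvg n x0 - x0 k) / ((n : ℝ) - 1))) :=
  stmt3_general n hn δ η hδ0 hδ1 x0 hsorted k hΔ0 hΔη hsep
end

section
/- Suppose m = n. Assume the initial vector satisfies 0 < x̄(0) − x_1(0) ≤ η and, for every j ∈ {2,…,n}, |x_j(0) − x̄(0)| ≥ η + (x̄(0) − x_1(0))/(n−1). Write ρ = 1 − δ + δ/n. Then for every t ≥ 0: (i) x_1(t) = x_1(0) + δ (∑_{k=0}^{t−1} ρ^k)(x̄(0) − x_1(0)); (ii) x̄(t) = x̄(0) + (δ/n)(∑_{k=0}^{t−1} ρ^k)(x̄(0) − x_1(0)); (iii) x̄(t) − x_1(t) = ρ^t (x̄(0) − x_1(0)), which lies in (0, η]; and (iv) |x_j(t) − x̄(t)| > η for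 every j ≠ 1 and every t ≥ 1. -/
open Filter MeasureTheory

/-- for `m = n`, under the hypotheses of Statement 7 and with
`ρ = 1 − δ + δ/n`, explicit formulas hold for `x_1(t)`, `x̄(t)`, their difference is
`ρ^t (x̄(0) − x_1(0)) ∈ (0, η]`, and all other nodes stay outside the confidence range. -/
theorem stmt8 (n : ℕ) (hn : 2 ≤ n) (δ η : ℝ) (hδ0 : 0 < δ) (hδ1 : δ < 1) (hη0 : 0 < η)
    (x0 : Fin n → ℝ)
    (h1 : 0 < cliqueAvg n x0 - x0 ⟨0, by omega⟩)
    (h2 : cliqueAvg n x0 - x0 ⟨0, by omega⟩ ≤ η)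
    (h3 : ∀ j : Fin n, j ≠ ⟨0, by omega⟩ →
      η + (cliqueAvg n x0 - x0 ⟨0, by omega⟩) / ((n : ℝ) - 1) ≤ |x0 j - cliqueAvg n x0|)
    (ρ : ℝ) (hρ : ρ = 1 - δ + δ / (n : ℝ)) :
    ∀ t : ℕ,
      fcTraj n δ η x0 t ⟨0, by omega⟩ =
        x0 ⟨0, by omega⟩ +
          δ * (∑ k ∈ Finset.range t, ρ ^ k) * (cliqueAvg n x0 - x0 ⟨0, by omega⟩) ∧
      cliqueAvg n (fcTraj n δ η x0 t) =
        cliqueAvg n x0 +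
          (δ / (n : ℝ)) * (∑ k ∈ Finset.range t, ρ ^ k) * (cliqueAvg n x0 - x0 ⟨0, by omega⟩) ∧
      cliqueAvg n (fcTraj n δ η x0 t) - fcTraj n δ η x0 t ⟨0, by omega⟩ =
        ρ ^ t * (cliqueAvg n x0 - x0 ⟨0, by omega⟩) ∧
      cliqueAvg n (fcTraj n δ η x0 t) - fcTraj n δ η x0 t ⟨0, by omega⟩ ∈ Set.Ioc 0 η ∧
      (∀ j : Fin n, j ≠ ⟨0, by omega⟩ → 1 ≤ t →
        η < |fcTraj n δ η x0 t j - cliqueAvg n (fcTraj n δ η x0 t)|) := by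
  set z : Fin n := ⟨0, by omega⟩ with hz
  set d : ℝ := cliqueAvg n x0 - x0 z with hd
  have hn2 : (2:ℝ) ≤ (n:ℝ) := by exact_mod_cast hn
  have hn1 : (1:ℝ) ≤ (n:ℝ) - 1 := by linarith
  have hnpos : (0:ℝ) < (n:ℝ) := by linarith
  have hρ0 : 0 < ρ := by
    have : 0 < δ / (n:ℝ) := div_pos hδ0 hnpos
    rw [hρ]; linarith
  have hρ1 : ρ < 1 := by
    have : δ / (n:ℝ) < δ := by
      rw [div_lt_iff₀ hnpos]; nlinarith
    rw [hρ]; linarith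
  have hdpos : 0 < d := h1
  -- the difference formula follows from the two explicit formulas
  have hdiff_of : ∀ t : ℕ, ∀ a b : ℝ,
      a = x0 z + δ * (∑ k ∈ Finset.range t, ρ ^ k) * d →
      b = cliqueAvg n x0 + δ / (n:ℝ) * (∑ k ∈ Finset.range t, ρ ^ k) * d →
      b - a = ρ ^ t * d := by
    intro t a b ha hb
    set S := ∑ k ∈ Finset.range t, ρ ^ k with hS
    have hgeom : (1 - ρ) * S = 1 - ρ ^ t := by
      linear_combination (-1 : ℝ) * geom_sum_mul ρ t
    have h' : δ / (n:ℝ) - δ = ρ - 1 := by rw [hρ]; ring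
    have hba : b - a = d + (δ / (n:ℝ) - δ) * S * d := by
      rw [ha, hb, hd]; ring
    rw [hba, h']
    linear_combination (-d) * hgeom
  have hSnn : ∀ t : ℕ, (0:ℝ) ≤ ∑ k ∈ Finset.range t, ρ ^ k := by
    intro t
    exact Finset.sum_nonneg fun k _ => (pow_pos hρ0 k).le
  have hSbound : ∀ t : ℕ, δ / (n:ℝ) * (∑ k ∈ Finset.range t, ρ ^ k) * d < d / ((n:ℝ) - 1) := by
    intro t
    set S := ∑ k ∈ Finset.range t, ρ ^ k with hS
    have hgeom : (1 - ρ) * S = 1 - ρ ^ t := by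
      linear_combination (-1 : ℝ) * geom_sum_mul ρ t
    have hlt : (1 - ρ) * S < 1 := by
      have := pow_pos hρ0 t; rw [hgeom]; linarith
    have h1ρ : 1 - ρ = δ * ((n:ℝ) - 1) / (n:ℝ) := by rw [hρ]; field_simp; ring
    rw [h1ρ] at hlt
    rw [lt_div_iff₀ (by linarith : (0:ℝ) < (n:ℝ) - 1)]
    rw [show δ / (n:ℝ) * S * d * ((n:ℝ) - 1) = δ * ((n:ℝ) - 1) / (n:ℝ) * S * d from by ring]
    have := mul_lt_mul_of_pos_right hlt hdpos
    linarith
  -- confidence violation for the other nodes, given the invariant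
  have hcondj_of : ∀ t : ℕ,
      (∀ j : Fin n, j ≠ z → fcTraj n δ η x0 t j = x0 j) →
      cliqueAvg n (fcTraj n δ η x0 t) =
        cliqueAvg n x0 + δ / (n:ℝ) * (∑ k ∈ Finset.range t, ρ ^ k) * d →
      ∀ j : Fin n, j ≠ z →
        η < |fcTraj n δ η x0 t j - cliqueAvg n (fcTraj n δ η x0 t)| := by
    intro t hfix hA j hj
    set S := ∑ k ∈ Finset.range t, ρ ^ k with hS
    rw [hfix j hj, hA]
    have htri := abs_sub_le (x0 j) (cliqueAvg n x0 + δ / (n:ℝ) * S * d) (cliqueAvg n x0)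
    have hAavg : |cliqueAvg n x0 + δ / (n:ℝ) * S * d - cliqueAvg n x0| = δ / (n:ℝ) * S * d := by
      have : cliqueAvg n x0 + δ / (n:ℝ) * S * d - cliqueAvg n x0 = δ / (n:ℝ) * S * d := by ring
      rw [this, abs_of_nonneg (mul_nonneg (mul_nonneg (div_nonneg hδ0.le hnpos.le) (hSnn t)) hdpos.le)]
    have h3j := h3 j hj
    have := hSbound t
    linarith
  -- main invariant
  have key : ∀ t : ℕ,
      fcTraj n δ η x0 t z = x0 z + δ * (∑ k ∈ Finset.range t, ρ ^ k) * d ∧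
      cliqueAvg n (fcTraj n δ η x0 t) =
        cliqueAvg n x0 + δ / (n:ℝ) * (∑ k ∈ Finset.range t, ρ ^ k) * d ∧
      (∀ j : Fin n, j ≠ z → fcTraj n δ η x0 t j = x0 j) := by
    intro t
    induction t with
    | zero => refine ⟨by simp [fcTraj], by simp [fcTraj], fun j _ => by simp [fcTraj]⟩
    | succ t ih =>
      obtain ⟨ih1, ih2, ih3⟩ := ih
      have hdiff : cliqueAvg n (fcTraj n δ η x0 t) - fcTraj n δ η x0 t z = ρ ^ t * d :=
        hdiff_of t _ _ ih1 ih2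
      have hρt1 : ρ ^ t ≤ 1 := pow_le_one₀ hρ0.le hρ1.le
      have hρtpos : 0 < ρ ^ t := pow_pos hρ0 t
      have hcond0 : |fcTraj n δ η x0 t z - cliqueAvg n (fcTraj n δ η x0 t)| ≤ η := by
        rw [abs_sub_comm, hdiff, abs_of_pos (mul_pos hρtpos hdpos)]
        nlinarith
      have hcondj := hcondj_of t ih3 ih2
      have hnew0 : fcTraj n δ η x0 (t+1) z =
          (1 - δ) * fcTraj n δ η x0 t z + δ * cliqueAvg n (fcTraj n δ η x0 t) := by
        simp only [fcTraj]
        rw [if_pos hcond0]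
      have hnewj : ∀ j : Fin n, j ≠ z → fcTraj n δ η x0 (t+1) j = x0 j := by
        intro j hj
        simp only [fcTraj]
        rw [if_neg (not_le.mpr (hcondj j hj))]
        exact ih3 j hj
      have hsum : ∑ j, fcTraj n δ η x0 (t+1) j =
          (∑ j, fcTraj n δ η x0 t j) + δ * (ρ ^ t * d) := by
        have hpt : ∀ j : Fin n, fcTraj n δ η x0 (t+1) j =
            fcTraj n δ η x0 t j + (if j = z then δ * (ρ ^ t * d) else 0) := by
          intro j
          by_cases hj : j = z
          · subst hj
            rw [hnew0, if_pos rfl, ← hdiff]; ring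
          · rw [hnewj j hj, ih3 j hj, if_neg hj, add_zero]
        rw [Finset.sum_congr rfl fun j _ => hpt j, Finset.sum_add_distrib,
          Finset.sum_ite_eq' Finset.univ z fun _ => δ * (ρ ^ t * d)]
        simp
      have hA' : cliqueAvg n (fcTraj n δ η x0 (t+1)) =
          cliqueAvg n (fcTraj n δ η x0 t) + δ / (n:ℝ) * (ρ ^ t * d) := by
        simp only [cliqueAvg]
        rw [hsum]
        field_simp
      refine ⟨?_, ?_, hnewj⟩
      · have h0 : fcTraj n δ η x0 (t+1) z = fcTraj n δ η x0 t z + δ * (ρ ^ t * d) := by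
          rw [hnew0]; linear_combination δ * hdiff
        rw [h0, ih1, Finset.sum_range_succ]; ring
      · rw [hA', ih2, Finset.sum_range_succ]; ring
  intro t
  obtain ⟨e1, e2, e3⟩ := key t
  have hdiff : cliqueAvg n (fcTraj n δ η x0 t) - fcTraj n δ η x0 t z = ρ ^ t * d :=
    hdiff_of t _ _ e1 e2
  have hρt1 : ρ ^ t ≤ 1 := pow_le_one₀ hρ0.le hρ1.le
  have hρtpos : 0 < ρ ^ t := pow_pos hρ0 t
  refine ⟨e1, e2, hdiff, ?_, fun j hj _ => hcondj_of t e3 e2 j hj⟩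
  rw [hdiff]
  exact ⟨mul_pos hρtpos hdpos, by nlinarith⟩
end

section
/- Suppose m = n, n ≥ 4 and η < 1/(n+1). If the initial vector satisfies x_1(0) = 0 and x_i(0) ∈ (1 − η^n, 1] for every i ∈ {2,…,n}, then x̄(0) − x_1(0) > η and x_i(0) − x̄(0) > η for every i ∈ {2,…,n}; consequently the dynamics is frozen, x_i(t) = x_i(0) for every i and every t ≥ 0, and the node states do not reach consensus. -/
open Filter MeasureTheory

/-- for `m = n`, `n ≥ 4`, `η < 1/(n+1)`, if `x_1(0) = 0` and all other
initial opinions lie in `(1 − η^n, 1]`, then every node is farther than `η` from the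
average, the dynamics is frozen, and no consensus is reached. -/
theorem stmt12 (n : ℕ) (hn : 4 ≤ n) (δ η : ℝ) (hδ0 : 0 < δ) (hδ1 : δ < 1) (hη0 : 0 < η)
    (hη : η < 1 / ((n : ℝ) + 1))
    (x0 : Fin n → ℝ)
    (h1 : x0 ⟨0, by omega⟩ = 0)
    (h2 : ∀ i : Fin n, i ≠ ⟨0, by omega⟩ → x0 i ∈ Set.Ioc (1 - η ^ n) 1) :
    η < cliqueAvg n x0 - x0 ⟨0, by omega⟩ ∧
    (∀ i : Fin n, i ≠ ⟨0, by omega⟩ → η < x0 i - cliqueAvg n x0) ∧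
    (∀ i : Fin n, ∀ t : ℕ, fcTraj n δ η x0 t i = x0 i) ∧
    ¬ ∃ c : ℝ, ∀ i : Fin n, Tendsto (fun t => fcTraj n δ η x0 t i) atTop (nhds c) := by
  have hN : (4:ℝ) ≤ (n:ℝ) := by exact_mod_cast hn
  have hNpos : (0:ℝ) < (n:ℝ) := by linarith
  have hη1 : η * ((n:ℝ) + 1) < 1 := by
    have h := (lt_div_iff₀ (by linarith : (0:ℝ) < (n:ℝ) + 1)).mp hη
    linarith
  have hηle1 : η ≤ 1 := by nlinarith
  have hpowle : η ^ n ≤ η := pow_le_of_le_one hη0.le hηle1 (by omega)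
  have hpow2 : η ^ n ≤ η ^ 2 := pow_le_pow_of_le_one hη0.le hηle1 (by omega)
  have hpowpos : 0 < η ^ n := pow_pos hη0 n
  set z : Fin n := ⟨0, by omega⟩ with hzdef
  set S : ℝ := ∑ j, x0 j with hSdef
  have hzmem : z ∈ Finset.univ (α := Fin n) := Finset.mem_univ z
  have hsum : x0 z + ∑ j ∈ Finset.univ.erase z, x0 j = S :=
    Finset.add_sum_erase _ _ hzmem
  have hcard : (Finset.univ.erase z).card = n - 1 := by
    rw [Finset.card_erase_of_mem hzmem, Finset.card_univ, Fintype.card_fin]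
  have hcardR : ((Finset.univ.erase z).card : ℝ) = (n:ℝ) - 1 := by
    rw [hcard, Nat.cast_sub (by omega)]; norm_num
  have hne : (Finset.univ.erase z).Nonempty := by
    refine ⟨⟨1, by omega⟩, Finset.mem_erase.mpr ⟨?_, Finset.mem_univ _⟩⟩
    simp [hzdef, Fin.ext_iff]
  have hlo : ((n:ℝ) - 1) * (1 - η ^ n) < ∑ j ∈ Finset.univ.erase z, x0 j := by
    have h := Finset.sum_lt_sum_of_nonempty hne
      (f := fun _ => (1 - η ^ n)) (g := x0)
      (fun i hi => (h2 i (Finset.mem_erase.mp hi).1).1)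
    rwa [Finset.sum_const, nsmul_eq_mul, hcardR] at h
  have hhi : ∑ j ∈ Finset.univ.erase z, x0 j ≤ (n:ℝ) - 1 := by
    have h := Finset.sum_le_card_nsmul (Finset.univ.erase z) x0 1
      (fun i hi => (h2 i (Finset.mem_erase.mp hi).1).2)
    rwa [nsmul_eq_mul, hcardR, mul_one] at h
  have hSlo : ((n:ℝ) - 1) * (1 - η ^ n) < S := by
    rw [← hsum, h1]; linarith
  have hShi : S ≤ (n:ℝ) - 1 := by rw [← hsum, h1]; linarith
  have havg : cliqueAvg n x0 = S / (n:ℝ) := rfl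
  -- key scalar inequalities
  have keyA : η * (n:ℝ) < ((n:ℝ) - 1) * (1 - η ^ n) := by
    have hmul : ((n:ℝ) - 1) * (η ^ n) ≤ ((n:ℝ) - 1) * η :=
      mul_le_mul_of_nonneg_left hpowle (by linarith)
    nlinarith [hη1, hη0.le]
  have keyB : (n:ℝ) * η + (n:ℝ) * η ^ n < 1 := by
    have h3 : η * (η * ((n:ℝ) + 1)) < η * 1 := mul_lt_mul_of_pos_left hη1 hη0
    have h4 : (n:ℝ) * η ^ n ≤ (n:ℝ) * η ^ 2 := mul_le_mul_of_nonneg_left hpow2 hNpos.le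
    nlinarith [sq_nonneg η, hη0.le]
  have hA : η < cliqueAvg n x0 - x0 z := by
    rw [havg, h1, sub_zero, lt_div_iff₀ hNpos]
    linarith
  have hB : ∀ i : Fin n, i ≠ z → η < x0 i - cliqueAvg n x0 := by
    intro i hi
    obtain ⟨hxl, hxr⟩ := h2 i hi
    rw [havg]
    have hdd : S / (n:ℝ) ≤ ((n:ℝ) - 1) / (n:ℝ) := by gcongr
    have hdd2 : ((n:ℝ) - 1) / (n:ℝ) * (n:ℝ) = (n:ℝ) - 1 := div_mul_cancel₀ _ hNpos.ne'
    nlinarith [keyB, hNpos]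
  have havgpos : 0 < cliqueAvg n x0 := lt_trans hη0 (by simpa [h1] using hA)
  have habs : ∀ i : Fin n, ¬ |x0 i - cliqueAvg n x0| ≤ η := by
    intro i
    rw [not_le]
    rcases eq_or_ne i z with rfl | hi
    · rw [h1, zero_sub, abs_neg, abs_of_pos havgpos]
      simpa [h1] using hA
    · have := hB i hi
      rw [abs_of_pos (by linarith)]
      exact this
  have hfix : ∀ t : ℕ, fcTraj n δ η x0 t = x0 := by
    intro t
    induction t with
    | zero => rfl
    | succ t ih =>
      funext i
      show (if |fcTraj n δ η x0 t i - cliqueAvg n (fcTraj n δ η x0 t)| ≤ η then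
          (1 - δ) * fcTraj n δ η x0 t i + δ * cliqueAvg n (fcTraj n δ η x0 t)
        else fcTraj n δ η x0 t i) = x0 i
      rw [ih, if_neg (habs i)]
  refine ⟨hA, hB, fun i t => by rw [hfix t], ?_⟩
  rintro ⟨c, hc⟩
  have hc0 : c = 0 := by
    have h0 := hc z
    simp only [hfix, h1] at h0
    exact (tendsto_nhds_unique h0 tendsto_const_nhds)
  set i1 : Fin n := ⟨1, by omega⟩ with hi1def
  have hi1 : i1 ≠ z := by simp [hi1def, hzdef, Fin.ext_iff]
  have hc1 : c = x0 i1 := by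
    have h0 := hc i1
    simp only [hfix] at h0
    exact (tendsto_nhds_unique h0 tendsto_const_nhds)
  have := (h2 i1 hi1).1
  have hlt1 : η ^ n < 1 := pow_lt_one₀ hη0.le (by linarith [hη1]) (by omega)
  rw [hc0] at hc1
  nlinarith
end

section
/- Let A and B be two m-element subsets of {1,…,n} having the same class, i.e., |A ∩ G1| = |B ∩ G1|, |A ∩ {s}| = |B ∩ {s}| and |A ∩ G3| = |B ∩ G3|. Then |avg_A − avg_B| ≤ α_s. -/
lemma sum_bound_aux (S : Finset ℕ) (x : ℕ → ℝ) (lo hi : ℝ)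
    (h : ∀ j ∈ S, lo ≤ x j ∧ x j ≤ hi) :
    (S.card : ℝ) * lo ≤ ∑ j ∈ S, x j ∧ ∑ j ∈ S, x j ≤ (S.card : ℝ) * hi := by
  constructor
  · calc (S.card : ℝ) * lo = ∑ _j ∈ S, lo := by rw [Finset.sum_const, nsmul_eq_mul]
      _ ≤ ∑ j ∈ S, x j := Finset.sum_le_sum (fun j hj => (h j hj).1)
  · calc ∑ j ∈ S, x j ≤ ∑ _j ∈ S, hi := Finset.sum_le_sum (fun j hj => (h j hj).2)
      _ = (S.card : ℝ) * hi := by rw [Finset.sum_const, nsmul_eq_mul]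

/-- two `m`-element subsets of `{1,…,n}` with the same class
`(|A ∩ G1|, |A ∩ {s}|, |A ∩ G3|)` have averages differing by at most
`α_s = max (x_{s−1} − x_1) (x_n − x_{s+1})`. -/
theorem stmt14 (n m s : ℕ) (hm1 : 1 ≤ m) (hmn : m ≤ n)
    (hs_lo : n - m + 1 ≤ s) (hs_hi : s ≤ m - 1) (hs2 : 2 ≤ s) (hsn : s + 1 ≤ n)
    (x : ℕ → ℝ) (hmono : ∀ i j : ℕ, 1 ≤ i → i ≤ j → j ≤ n → x i ≤ x j)
    (A B : Finset ℕ) (hA : A ⊆ Finset.Icc 1 n) (hB : B ⊆ Finset.Icc 1 n)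
    (hAcard : A.card = m) (hBcard : B.card = m)
    (h1 : (A ∩ Finset.Icc 1 (s - 1)).card = (B ∩ Finset.Icc 1 (s - 1)).card)
    (h2 : (A ∩ {s}).card = (B ∩ {s}).card)
    (h3 : (A ∩ Finset.Icc (s + 1) n).card = (B ∩ Finset.Icc (s + 1) n).card) :
    |(∑ j ∈ A, x j) / (m : ℝ) - (∑ j ∈ B, x j) / (m : ℝ)| ≤
      max (x (s - 1) - x 1) (x n - x (s + 1)) := by
  set α : ℝ := max (x (s - 1) - x 1) (x n - x (s + 1)) with hα
  have hα1 : x (s - 1) - x 1 ≤ α := le_max_left _ _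
  have hα3 : x n - x (s + 1) ≤ α := le_max_right _ _
  -- decomposition of any subset of Icc 1 n
  have decomp : ∀ C : Finset ℕ, C ⊆ Finset.Icc 1 n →
      ∑ j ∈ C, x j = (∑ j ∈ C ∩ Finset.Icc 1 (s-1), x j)
        + (∑ j ∈ C ∩ {s}, x j) + (∑ j ∈ C ∩ Finset.Icc (s+1) n, x j) := by
    intro C hC
    have hCeq : C = (C ∩ Finset.Icc 1 (s-1)) ∪ (C ∩ {s}) ∪ (C ∩ Finset.Icc (s+1) n) := by
      ext j
      simp only [Finset.mem_union, Finset.mem_inter, Finset.mem_Icc, Finset.mem_singleton]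
      constructor
      · intro hj
        have hb := hC hj
        simp only [Finset.mem_Icc] at hb
        have htri : j ≤ s - 1 ∨ j = s ∨ s + 1 ≤ j := by omega
        rcases htri with h | h | h
        · exact Or.inl (Or.inl ⟨hj, by omega, h⟩)
        · exact Or.inl (Or.inr ⟨hj, h⟩)
        · exact Or.inr ⟨hj, h, hb.2⟩
      · rintro ((⟨h, _⟩ | ⟨h, _⟩) | ⟨h, _⟩) <;> exact h
    have hd1 : Disjoint (C ∩ Finset.Icc 1 (s-1)) (C ∩ {s}) := by
      rw [Finset.disjoint_left]
      intro j hj hj'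
      simp only [Finset.mem_inter, Finset.mem_Icc, Finset.mem_singleton] at hj hj'
      omega
    have hd2 : Disjoint ((C ∩ Finset.Icc 1 (s-1)) ∪ (C ∩ {s})) (C ∩ Finset.Icc (s+1) n) := by
      rw [Finset.disjoint_left]
      intro j hj hj'
      simp only [Finset.mem_union, Finset.mem_inter, Finset.mem_Icc,
        Finset.mem_singleton] at hj hj'
      omega
    conv_lhs => rw [hCeq]
    rw [Finset.sum_union hd2, Finset.sum_union hd1]
  -- bounds on group sums
  have bound1 : ∀ C : Finset ℕ,
      ((C ∩ Finset.Icc 1 (s-1)).card : ℝ) * x 1 ≤ ∑ j ∈ C ∩ Finset.Icc 1 (s-1), x j ∧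
      ∑ j ∈ C ∩ Finset.Icc 1 (s-1), x j ≤ ((C ∩ Finset.Icc 1 (s-1)).card : ℝ) * x (s-1) := by
    intro C
    apply sum_bound_aux
    intro j hj
    simp only [Finset.mem_inter, Finset.mem_Icc] at hj
    exact ⟨hmono 1 j le_rfl hj.2.1 (by omega), hmono j (s-1) hj.2.1 hj.2.2 (by omega)⟩
  have bound3 : ∀ C : Finset ℕ,
      ((C ∩ Finset.Icc (s+1) n).card : ℝ) * x (s+1) ≤ ∑ j ∈ C ∩ Finset.Icc (s+1) n, x j ∧
      ∑ j ∈ C ∩ Finset.Icc (s+1) n, x j ≤ ((C ∩ Finset.Icc (s+1) n).card : ℝ) * x n := by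
    intro C
    apply sum_bound_aux
    intro j hj
    simp only [Finset.mem_inter, Finset.mem_Icc] at hj
    exact ⟨hmono (s+1) j (by omega) hj.2.1 hj.2.2, hmono j n (by omega) hj.2.2 le_rfl⟩
  -- middle sums equal
  have mid : ∀ C : Finset ℕ, ∑ j ∈ C ∩ {s}, x j = ((C ∩ {s}).card : ℝ) * x s := by
    intro C
    have : ∀ j ∈ C ∩ {s}, x j = x s := by
      intro j hj
      simp only [Finset.mem_inter, Finset.mem_singleton] at hj
      rw [hj.2]
    rw [Finset.sum_congr rfl this, Finset.sum_const, nsmul_eq_mul]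
  have midAB : ∑ j ∈ A ∩ {s}, x j = ∑ j ∈ B ∩ {s}, x j := by
    rw [mid A, mid B, h2]
  set k1 : ℕ := (A ∩ Finset.Icc 1 (s-1)).card with hk1
  set k3 : ℕ := (A ∩ Finset.Icc (s+1) n).card with hk3
  have hk13 : k1 + k3 ≤ m := by
    have hdisj : Disjoint (A ∩ Finset.Icc 1 (s-1)) (A ∩ Finset.Icc (s+1) n) := by
      rw [Finset.disjoint_left]
      intro j hj hj'
      simp only [Finset.mem_inter, Finset.mem_Icc] at hj hj'
      omega
    calc k1 + k3 = ((A ∩ Finset.Icc 1 (s-1)) ∪ (A ∩ Finset.Icc (s+1) n)).card :=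
          (Finset.card_union_of_disjoint hdisj).symm
      _ ≤ A.card := Finset.card_le_card (by
          intro j hj
          simp only [Finset.mem_union, Finset.mem_inter] at hj
          rcases hj with h | h <;> exact h.1)
      _ = m := hAcard
  have hαnn : (0:ℝ) ≤ α := by
    have : x 1 ≤ x (s-1) := hmono 1 (s-1) le_rfl (by omega) (by omega)
    have h' : (0:ℝ) ≤ x (s-1) - x 1 := by linarith
    exact le_trans h' hα1
  -- main difference bound
  have key : |(∑ j ∈ A, x j) - (∑ j ∈ B, x j)| ≤ (m : ℝ) * α := by
    rw [decomp A hA, decomp B hB, midAB]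
    have b1A := bound1 A; have b1B := bound1 B
    have b3A := bound3 A; have b3B := bound3 B
    rw [← h1] at b1B; rw [← h3] at b3B
    rw [abs_le]
    have hk1a : (0:ℝ) ≤ (k1:ℝ) := Nat.cast_nonneg _
    have hk3a : (0:ℝ) ≤ (k3:ℝ) := Nat.cast_nonneg _
    have hm' : (k1:ℝ) + (k3:ℝ) ≤ (m:ℝ) := by exact_mod_cast hk13
    have e1 : (k1:ℝ) * (x (s-1) - x 1) ≤ (k1:ℝ) * α := by
      exact mul_le_mul_of_nonneg_left hα1 hk1a
    have e3 : (k3:ℝ) * (x n - x (s+1)) ≤ (k3:ℝ) * α := by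
      exact mul_le_mul_of_nonneg_left hα3 hk3a
    have emax : (k1:ℝ) * α + (k3:ℝ) * α ≤ (m:ℝ) * α := by
      nlinarith
    constructor <;> linarith [b1A.1, b1A.2, b1B.1, b1B.2, b3A.1, b3A.2, b3B.1, b3B.2]
  have hmpos : (0:ℝ) < (m:ℝ) := by exact_mod_cast hm1
  rw [div_sub_div_same, abs_div, abs_of_pos hmpos, div_le_iff₀ hmpos]
  linarith [key]
end
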